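/- Let ν, θ, μ be ordinals below ω^ω such that θ + ν ≤ μ ≤ θ ⨣ ν and ν ⪯ μ. Then θ + ν ⪯ μ. -/

import Mathlib

open Ordinal

universe u

namespace Ordinal

/-- Natural (Hessenberg) addition of ordinals, as defined in Mathlib (December 2024),
which has since removed it. -/
noncomputable def nadd (a b : Ordinal.{u}) : Ordinal.{u} :=
  max (⨆ x : Set.Iio a, Order.succ (nadd x.1 b)) (⨆ x : Set.Iio b, Order.succ (nadd a x.1))
termination_by (a, b)
decreasing_by
  · exact Prod.Lex.left _ _ x.2
  · exact Prod.Lex.right _ x.2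

end Ordinal

infixl:65 " ♯ " => Ordinal.nadd

/-- The ordinal `ω^d * a_d + ... + ω * a_1 + a_0`, i.e. the ordinal below `ω^ω` with
Cantor normal form given by the natural-number coefficients `a 0, ..., a d`. -/
noncomputable def cnf (d : ℕ) (a : ℕ → ℕ) : Ordinal :=
  ((List.range (d + 1)).reverse.map (fun i => ω ^ i * (a i : Ordinal))).sum

/-- `α` is weaker than `β`: every Cantor coefficient of `α` is at most the
corresponding Cantor coefficient of `β`. -/
def Weaker (α β : Ordinal) : Prop :=
  ∃ (d : ℕ) (a b : ℕ → ℕ), α = cnf d a ∧ β = cnf d b ∧ ∀ i, a i ≤ b i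

/-! Let `n` be the leading exponent of `ν` and write `θ = ω ^ n * q + ρ` with `ρ < ω ^ n`.
Since `ρ` is absorbed by `ν`, `θ + ν = ω ^ n * q + ν`, and this is also `ω ^ n * q ♯ ν`: a
natural sum is the ordinary sum when every exponent on the left is at least every exponent on
the right. Below `ω ^ ω`, `ν ⪯ μ` means `μ = γ ♯ ν` for some `γ`; cancelling `ν` in
`ω ^ n * q ♯ ν ≤ γ ♯ ν ≤ θ ♯ ν` gives `ω ^ n * q ≤ γ ≤ ω ^ n * q + ρ`, so
`γ = ω ^ n * q ♯ σ` with `σ ≤ ρ`, and then `μ = (θ + ν) ♯ σ`. -/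

namespace Ordinal

variable {a b c : Ordinal.{u}}

theorem nadd_le_iff : b ♯ c ≤ a ↔ (∀ b' < b, b' ♯ c < a) ∧ ∀ c' < c, b ♯ c' < a := by
  rw [nadd, max_le_iff, Ordinal.iSup_le_iff, Ordinal.iSup_le_iff]
  simp only [Order.succ_le_iff, Subtype.forall, Set.mem_Iio]

theorem lt_nadd_iff : a < b ♯ c ↔ (∃ b' < b, a ≤ b' ♯ c) ∨ ∃ c' < c, a ≤ b ♯ c' := by
  rw [nadd, lt_max_iff, Ordinal.lt_iSup_iff, Ordinal.lt_iSup_iff]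
  simp only [Order.lt_succ_iff, Subtype.exists, Set.mem_Iio, exists_prop]

theorem nadd_left_strictMono (a : Ordinal.{u}) : StrictMono (a ♯ ·) :=
  fun _ _ h => lt_nadd_iff.2 (Or.inr ⟨_, h, le_rfl⟩)

theorem nadd_right_strictMono (a : Ordinal.{u}) : StrictMono (· ♯ a) :=
  fun _ _ h => lt_nadd_iff.2 (Or.inl ⟨_, h, le_rfl⟩)

theorem nadd_lt_nadd_left (h : b < c) (a : Ordinal.{u}) : a ♯ b < a ♯ c :=
  nadd_left_strictMono a h

theorem nadd_lt_nadd_right (h : b < c) (a : Ordinal.{u}) : b ♯ a < c ♯ a :=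
  nadd_right_strictMono a h

theorem nadd_le_nadd_right (h : b ≤ c) (a : Ordinal.{u}) : b ♯ a ≤ c ♯ a :=
  (nadd_right_strictMono a).monotone h

theorem nadd_le_nadd_iff_right : b ♯ a ≤ c ♯ a ↔ b ≤ c :=
  (nadd_right_strictMono a).le_iff_le

theorem le_nadd_self (a b : Ordinal.{u}) : a ≤ a ♯ b :=
  (nadd_right_strictMono b).le_apply

theorem nadd_comm_le (a b : Ordinal.{u}) : a ♯ b ≤ b ♯ a :=
  nadd_le_iff.2 ⟨fun a' ha => (nadd_comm_le a' b).trans_lt (nadd_lt_nadd_left ha _),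
    fun b' hb => (nadd_comm_le a b').trans_lt (nadd_lt_nadd_right hb _)⟩
termination_by (a, b)

theorem nadd_comm (a b : Ordinal.{u}) : a ♯ b = b ♯ a :=
  (nadd_comm_le a b).antisymm (nadd_comm_le b a)

theorem nadd_assoc_le (a b c : Ordinal.{u}) : a ♯ b ♯ c ≤ a ♯ (b ♯ c) := by
  refine nadd_le_iff.2 ⟨fun d hd => ?_, fun c' hc => ?_⟩
  · rcases lt_nadd_iff.1 hd with ⟨a', ha, hle⟩ | ⟨b', hb, hle⟩
    · exact ((nadd_le_nadd_right hle c).trans (nadd_assoc_le a' b c)).trans_lt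
        (nadd_lt_nadd_right ha _)
    · exact ((nadd_le_nadd_right hle c).trans (nadd_assoc_le a b' c)).trans_lt
        (nadd_lt_nadd_left (nadd_lt_nadd_right hb c) _)
  · exact (nadd_assoc_le a b c').trans_lt (nadd_lt_nadd_left (nadd_lt_nadd_left hc b) _)
termination_by (a, b, c)

theorem nadd_assoc (a b c : Ordinal.{u}) : a ♯ b ♯ c = a ♯ (b ♯ c) := by
  refine (nadd_assoc_le a b c).antisymm ?_
  calc a ♯ (b ♯ c) = b ♯ c ♯ a := nadd_comm _ _
    _ ≤ b ♯ (c ♯ a) := nadd_assoc_le _ _ _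
    _ = c ♯ a ♯ b := nadd_comm _ _
    _ ≤ c ♯ (a ♯ b) := nadd_assoc_le _ _ _
    _ = a ♯ b ♯ c := nadd_comm _ _

theorem nadd_nadd_nadd_comm (a b c d : Ordinal.{u}) : a ♯ b ♯ (c ♯ d) = a ♯ c ♯ (b ♯ d) := by
  rw [nadd_assoc, nadd_assoc, ← nadd_assoc b, nadd_comm b c, nadd_assoc c]

instance : Std.Commutative (α := Ordinal.{u}) (· ♯ ·) := ⟨nadd_comm⟩

instance : Std.Associative (α := Ordinal.{u}) (· ♯ ·) := ⟨nadd_assoc⟩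

theorem nadd_zero (a : Ordinal.{u}) : a ♯ 0 = a :=
  (nadd_le_iff.2 ⟨fun a' ha => (nadd_zero a').trans_lt ha,
    fun _ h => (not_lt_zero h).elim⟩).antisymm (le_nadd_self a 0)
termination_by a

theorem add_le_nadd (a b : Ordinal.{u}) : a + b ≤ a ♯ b := by
  rcases eq_or_ne b 0 with rfl | hb
  · rw [add_zero, nadd_zero]
  refine le_of_forall_lt fun c hc => ?_
  obtain ⟨d, hd, hcd⟩ := (lt_add_iff hb).1 hc
  exact (hcd.trans (add_le_nadd a d)).trans_lt (nadd_lt_nadd_left hd a)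
termination_by b

namespace IsPrincipal

variable (hb : IsPrincipal (· ♯ ·) b)
include hb

theorem mul_nadd (a : Ordinal.{u}) {r : Ordinal.{u}} (hr : r < b) : b * a ♯ r = b * a + r := by
  refine le_antisymm (nadd_le_iff.2 ⟨fun x hx => ?_, fun r' hr' => ?_⟩) (add_le_nadd _ _)
  · obtain ⟨c, hc, t, ht, rfl⟩ := lt_mul_iff.1 hx
    calc (b * c + t) ♯ r = b * c ♯ (t ♯ r) := by rw [← mul_nadd c ht, nadd_assoc]
      _ = b * c + (t ♯ r) := mul_nadd c (hb ht hr)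
      _ < b * c + b := add_lt_add_right (hb ht hr) _
      _ = b * (c + 1) := (mul_add_one b c).symm
      _ ≤ b * a + r := (mul_le_mul_right (Order.add_one_le_of_lt hc) b).trans le_self_add
  · rw [mul_nadd a (hr'.trans hr)]
    exact add_lt_add_right hr' _
termination_by (a, r)

theorem mul_nadd_self (a : Ordinal.{u}) : b * a ♯ b = b * (a + 1) := by
  rw [mul_add_one]
  refine le_antisymm (nadd_le_iff.2 ⟨fun x hx => ?_, fun t ht => ?_⟩) (add_le_nadd _ _)
  · obtain ⟨c, hc, t, ht, rfl⟩ := lt_mul_iff.1 hx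
    calc (b * c + t) ♯ b = b * c ♯ b ♯ t := by rw [← hb.mul_nadd c ht]; ac_rfl
      _ = b * (c + 1) + t := by rw [mul_nadd_self c, hb.mul_nadd _ ht]
      _ < b * (c + 1) + b := add_lt_add_right ht _
      _ ≤ b * a + b := add_le_add_left (mul_le_mul_right (Order.add_one_le_of_lt hc) b) _
  · rw [hb.mul_nadd a ht]
    exact add_lt_add_right ht _
termination_by a

theorem mul_nadd_mul_natCast (a : Ordinal.{u}) (n : ℕ) : b * a ♯ b * n = b * (a + n) := by
  induction n with
  | zero => rw [Nat.cast_zero, mul_zero, nadd_zero, add_zero]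
  | succ n ih =>
    rw [Nat.cast_succ, ← hb.mul_nadd_self, ← nadd_assoc, ih, hb.mul_nadd_self, add_assoc]

theorem mul_omega0 : IsPrincipal (· ♯ ·) (b * ω) := by
  refine (isPrincipal_iff_of_monotone (fun a => (nadd_left_strictMono a).monotone)
    (fun a => (nadd_right_strictMono a).monotone)).2 fun r hr => ?_
  obtain ⟨c, hc, hrc⟩ := (lt_mul_iff_of_isSuccLimit isSuccLimit_omega0).1 hr
  obtain ⟨n, rfl⟩ := lt_omega0.1 hc
  calc r ♯ r < b * n ♯ b * n := (nadd_lt_nadd_right hrc r).trans (nadd_lt_nadd_left hrc _)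
    _ = b * (n + n : ℕ) := by rw [hb.mul_nadd_mul_natCast, Nat.cast_add]
    _ < b * ω := by
      have : b ≠ 0 := by rintro rfl; simp at hr
      exact (mul_lt_mul_iff_right₀ (pos_iff_ne_zero.2 this)).2 (natCast_lt_omega0 _)

theorem mul_nadd_of_lt_mul_omega0 (a : Ordinal.{u}) {r : Ordinal.{u}} (hr : r < b * ω) :
    b * a ♯ r = b * a + r := by
  obtain ⟨c, hc, s, hs, rfl⟩ := lt_mul_iff.1 hr
  obtain ⟨n, rfl⟩ := lt_omega0.1 hc
  calc b * a ♯ (b * n + s) = b * a ♯ b * n ♯ s := by rw [← hb.mul_nadd n hs, nadd_assoc]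
    _ = b * (a + n) + s := by rw [hb.mul_nadd_mul_natCast, hb.mul_nadd _ hs]
    _ = b * a + (b * n + s) := by rw [mul_add, add_assoc]

end IsPrincipal

theorem isPrincipal_nadd_omega0_pow (k : ℕ) : IsPrincipal (· ♯ ·) (ω ^ k) := by
  induction k with
  | zero => rw [pow_zero, isPrincipal_one_iff, nadd_zero]
  | succ k ih => rw [pow_succ]; exact ih.mul_omega0

end Ordinal

theorem cnf_zero (a : ℕ → ℕ) : cnf 0 a = a 0 := by
  simp [cnf]

theorem cnf_succ (d : ℕ) (a : ℕ → ℕ) : cnf (d + 1) a = ω ^ (d + 1) * a (d + 1) + cnf d a := by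
  simp [cnf, List.range_succ]

theorem cnf_congr {d : ℕ} {a b : ℕ → ℕ} (h : ∀ i ≤ d, a i = b i) : cnf d a = cnf d b := by
  induction d with
  | zero => rw [cnf_zero, cnf_zero, h 0 le_rfl]
  | succ d ih =>
    rw [cnf_succ, cnf_succ, h (d + 1) le_rfl, ih fun i hi => h i (hi.trans d.le_succ)]

theorem cnf_lt_omega0_pow (d : ℕ) (a : ℕ → ℕ) : cnf d a < ω ^ (d + 1) := by
  induction d with
  | zero => simp [cnf_zero]
  | succ d ih =>
    rw [cnf_succ, pow_succ ω (d + 1)]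
    exact lt_mul_iff.2 ⟨_, natCast_lt_omega0 _, _, ih, rfl⟩

theorem exists_cnf_eq {d : ℕ} {x : Ordinal} (hx : x < ω ^ (d + 1)) : ∃ a, cnf d a = x := by
  induction d generalizing x with
  | zero =>
    obtain ⟨n, rfl⟩ := lt_omega0.1 (by simpa using hx)
    exact ⟨fun _ => n, cnf_zero _⟩
  | succ d ih =>
    rw [pow_succ ω (d + 1)] at hx
    obtain ⟨c, hc, s, hs, rfl⟩ := lt_mul_iff.1 hx
    obtain ⟨n, rfl⟩ := lt_omega0.1 hc
    obtain ⟨a, rfl⟩ := ih hs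
    refine ⟨Function.update a (d + 1) n, ?_⟩
    rw [cnf_succ, Function.update_self, cnf_congr fun i hi => Function.update_of_ne (by omega) _ _]

theorem cnf_nadd_cnf (d : ℕ) (a b : ℕ → ℕ) : cnf d a ♯ cnf d b = cnf d (a + b) := by
  induction d with
  | zero =>
    simpa [cnf_zero] using (isPrincipal_nadd_omega0_pow 0).mul_nadd_mul_natCast (a 0) (b 0)
  | succ d ih =>
    have hP := isPrincipal_nadd_omega0_pow (d + 1)
    rw [cnf_succ, cnf_succ, cnf_succ, ← hP.mul_nadd _ (cnf_lt_omega0_pow d a),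
      ← hP.mul_nadd _ (cnf_lt_omega0_pow d b), ← hP.mul_nadd _ (cnf_lt_omega0_pow d (a + b)), ← ih,
      nadd_nadd_nadd_comm, hP.mul_nadd_mul_natCast, Pi.add_apply, Nat.cast_add]

theorem exists_lt_omega0_pow_succ {x : Ordinal} (hx : x < ω ^ ω) : ∃ d : ℕ, x < ω ^ (d + 1) := by
  obtain ⟨c, hc, hxc⟩ := (lt_opow_of_isSuccLimit omega0_ne_zero isSuccLimit_omega0).1 hx
  obtain ⟨d, rfl⟩ := lt_omega0.1 hc
  rw [opow_natCast] at hxc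
  exact ⟨d, hxc.trans_le (pow_le_pow_right₀ one_lt_omega0.le d.le_succ)⟩

theorem Weaker.exists_nadd_eq {x y : Ordinal} (h : Weaker x y) : ∃ z, z ♯ x = y := by
  obtain ⟨d, a, b, rfl, rfl, hab⟩ := h
  exact ⟨cnf d (b - a), by rw [cnf_nadd_cnf]; exact cnf_congr fun i _ => Nat.sub_add_cancel (hab i)⟩

theorem weaker_nadd_right {x y : Ordinal} (h : x ♯ y < ω ^ ω) : Weaker x (x ♯ y) := by
  obtain ⟨d, hd⟩ := exists_lt_omega0_pow_succ h
  obtain ⟨b, rfl⟩ := exists_cnf_eq ((le_nadd_self y x).trans_lt (nadd_comm x y ▸ hd))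
  obtain ⟨a, rfl⟩ := exists_cnf_eq ((le_nadd_self x _).trans_lt hd)
  exact ⟨d, a, a + b, rfl, cnf_nadd_cnf d a b, fun i => Nat.le_add_right _ _⟩

theorem exists_lt_omega0_pow_succ_add_eq_right {ν : Ordinal} (hν : ν < ω ^ ω) :
    ∃ n : ℕ, ν < ω ^ (n + 1) ∧ ∀ ρ < ω ^ n, ρ + ν = ν := by
  rcases eq_or_ne ν 0 with rfl | hν0
  · exact ⟨0, by simp, fun ρ hρ => by simp_all⟩
  obtain ⟨n, hn⟩ := lt_omega0.1 ((lt_opow_iff_log_lt one_lt_omega0 hν0).1 hν)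
  refine ⟨n, ?_, fun ρ hρ => add_of_omega0_opow_le (b := n) ?_ ?_⟩
  · simpa [← opow_natCast, ← hn] using lt_opow_succ_log_self one_lt_omega0 ν
  · rwa [opow_natCast]
  · exact hn ▸ opow_log_le_self ω hν0

theorem add_weaker_general (ν θ μ : Ordinal)
    (hν : ν < ω ^ ω) (hμ : μ < ω ^ ω)
    (h₁ : θ + ν ≤ μ) (h₂ : μ ≤ θ ♯ ν) (h₃ : Weaker ν μ) :
    Weaker (θ + ν) μ := by
  obtain ⟨n, hνn, habsorb⟩ := exists_lt_omega0_pow_succ_add_eq_right hν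
  have hP := isPrincipal_nadd_omega0_pow n
  obtain ⟨q, ρ, hρ, rfl⟩ : ∃ q, ∃ ρ < ω ^ n, θ = ω ^ n * q + ρ :=
    ⟨_, _, mod_lt θ (pow_ne_zero n omega0_ne_zero), (div_add_mod θ _).symm⟩
  have hθν : ω ^ n * q + ρ + ν = ω ^ n * q ♯ ν := by
    rw [add_assoc, habsorb ρ hρ, hP.mul_nadd_of_lt_mul_omega0 q (by rwa [← pow_succ])]
  obtain ⟨γ, rfl⟩ := h₃.exists_nadd_eq
  obtain ⟨σ, rfl⟩ := exists_add_of_le (nadd_le_nadd_iff_right.1 (hθν ▸ h₁))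
  have hσ : σ < ω ^ n :=
    ((add_le_add_iff_left _).1 (nadd_le_nadd_iff_right.1 h₂)).trans_lt hρ
  have hμ_eq : (ω ^ n * q + σ) ♯ ν = (ω ^ n * q + ρ + ν) ♯ σ := by
    rw [hθν, ← hP.mul_nadd q hσ]; ac_rfl
  rw [hμ_eq] at hμ ⊢
  exact weaker_nadd_right hμ

/-- If `θ + ν ≤ μ ≤ θ ♯ ν` and `ν` is weaker than `μ`, then `θ + ν` is weaker than `μ`. -/
theorem add_weaker (ν θ μ : Ordinal)
    (hν : ν < ω ^ ω) (hθ : θ < ω ^ ω) (hμ : μ < ω ^ ω)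
    (h₁ : θ + ν ≤ μ) (h₂ : μ ≤ θ ♯ ν) (h₃ : Weaker ν μ) :
    Weaker (θ + ν) μ :=
  add_weaker_general ν θ μ hν hμ h₁ h₂ h₃
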